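/- Antiperiodicity and equioscillation of the standard function: Let β ≥ 0, let G be a real, continuous, 2π-periodic function, and let n ∈ ℕ. Then Φ_{n,β}^{G,φ} is continuous, satisfies Φ_{n,β}^{G,φ}(x + π/n) = −Φ_{n,β}^{G,φ}(x) for all x ∈ ℝ (hence is 2π/n-periodic), and there exist at least 2n points 0 ≤ t_1 < ⋯ < t_{2n} < 2π such that Φ_{n,β}^{G,φ}(t_j) = ε(−1)^j‖Φ_{n,β}^{G,φ}‖_∞ for j = 1,…,2n, where ε = 1 or ε = −1. -/

import Mathlib

open MeasureTheory Real Set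

noncomputable section

/-- Convolution of two `2π`-periodic functions: `(f ∗ g)(x) = (1/2π) ∫_0^{2π} f(x−t) g(t) dt`. -/
def conv (f g : ℝ → ℝ) : ℝ → ℝ :=
  fun x => (1 / (2 * π)) * ∫ t in (0:ℝ)..(2 * π), f (x - t) * g t

/-- Uniform (sup) norm of a function on `ℝ`. -/
def supNorm (f : ℝ → ℝ) : ℝ := ⨆ x : ℝ, |f x|

/-- `L_q` norm over a period `[0, 2π]`. -/
def LqNorm (q : ℝ) (f : ℝ → ℝ) : ℝ :=
  (∫ t in (0:ℝ)..(2 * π), |f t| ^ q) ^ (1 / q)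

/-- The kernel `K_β(z) = 1 + 2 ∑_{k≥1} cos(kz)/cosh(kβ)`. -/
def Kker (β : ℝ) : ℝ → ℝ :=
  fun z => 1 + 2 * ∑' k : ℕ, Real.cos (((k : ℝ) + 1) * z) / Real.cosh (((k : ℝ) + 1) * β)

/-- The `2π`-periodic step function `h_n`, equal to `(−1)^j` on `[(j−1)π/n, jπ/n)`. -/
def hstep (n : ℕ) : ℝ → ℝ :=
  fun x => (-1 : ℝ) ^ (⌊x * n / π⌋ + 1)

/-- `φ(K_β ∗ u)`, interpreted as `u` itself when `β = 0`. -/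
def phiK (β : ℝ) (φ u : ℝ → ℝ) : ℝ → ℝ :=
  if β = 0 then u else fun x => φ (conv (Kker β) u x)

/-- The standard function `Φ_{n,β}^{G,φ} = G ∗ φ(K_β ∗ h_n)`. -/
def stdPhi (G φ : ℝ → ℝ) (β : ℝ) (n : ℕ) : ℝ → ℝ :=
  conv G (phiK β φ (hstep n))

/-- `φ` is differentiable, odd, strictly increasing, with `φ'` continuous on `[−1,1]`. -/
structure IsAdmissiblePhi (φ : ℝ → ℝ) : Prop where
  differentiable : Differentiable ℝ φ
  odd : ∀ x, φ (-x) = -φ x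
  strictMono : StrictMono φ
  derivCont : ContinuousOn (deriv φ) (Icc (-1) 1)

/-- Number of (non-cyclic) sign changes in a list, zero terms already removed. -/
def signChangesAux (l : List ℝ) : ℕ :=
  (l.zip l.tail).countP fun p => decide (p.1 * p.2 < 0)

/-- `S^-(x)`: sign changes in a finite sequence, with zero terms discarded. -/
def signChanges (l : List ℝ) : ℕ :=
  signChangesAux (l.filter fun x => decide (x ≠ 0))

/-- `S_c^-(x)`: cyclic sign changes, the maximum of `S^-` over all cyclic rotations. -/
def cyclicSignChanges (l : List ℝ) : ℕ :=
  ((List.range l.length).map fun i => signChanges (l.rotate i)).foldr max 0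

/-- Lists of points `x_1 < ⋯ < x_m < x_1 + 2π`. -/
def WindowList (l : List ℝ) : Prop :=
  l.Chain' (· < ·) ∧ ∀ x ∈ l, ∀ y ∈ l, x < y + 2 * π

/-- `S_c(f)`: the number of cyclic sign changes of `f` on a period. -/
def Sc (f : ℝ → ℝ) : ℕ∞ :=
  ⨆ l : {l : List ℝ // WindowList l}, (cyclicSignChanges (l.1.map f) : ℕ∞)

/-- `S^-(f)` on the period `[0, 2π)` (non-cyclic sign changes). -/
def SminusPeriod (f : ℝ → ℝ) : ℕ∞ :=
  ⨆ l : {l : List ℝ // l.Chain' (· < ·) ∧ ∀ x ∈ l, x ∈ Ico (0:ℝ) (2 * π)},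
    (signChanges (l.1.map f) : ℕ∞)

/-- `2π`-periodic and piecewise continuous. -/
def PiecewiseContinuousPeriodic (f : ℝ → ℝ) : Prop :=
  Function.Periodic f (2 * π) ∧
  ∃ s : Finset ℝ, ContinuousOn f (Ico (0:ℝ) (2 * π) \ (s : Set ℝ))

/-- The subspace `X_m = {b + ∑_j b_j G(·−t_j) : ∑_j b_j = 0}`. -/
def XmSet (G : ℝ → ℝ) (m : ℕ) (t : Fin m → ℝ) : Set (ℝ → ℝ) :=
  {f | ∃ (b : ℝ) (c : Fin m → ℝ), (∑ j, c j) = 0 ∧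
        f = fun x => b + ∑ j, c j * G (x - t j)}

/-- Property B of a real, `2π`-periodic continuous kernel `G`. -/
def PropertyB (G : ℝ → ℝ) : Prop :=
  Continuous G ∧ Function.Periodic G (2 * π) ∧
  ∀ (m : ℕ) (t : Fin m → ℝ), 0 < m → StrictMono t →
    (∀ j, t j ∈ Ico (0:ℝ) (2 * π)) →
    (Module.finrank ℝ (Submodule.span ℝ (XmSet G m t)) = m ∧
     (Odd m → ∀ f ∈ XmSet G m t, f ≠ 0 → SminusPeriod f ≤ (m - 1 : ℕ)))

/-- Non-degenerate cyclic variation diminishing kernel. -/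
def NCVD (k : ℝ → ℝ) : Prop :=
  Continuous k ∧ Function.Periodic k (2 * π) ∧
  (∀ h : ℝ → ℝ, PiecewiseContinuousPeriodic h → Sc (conv k h) ≤ Sc h) ∧
  ∀ (n : ℕ) (x : Fin n → ℝ), 0 < n → StrictMono x →
    (∀ j, x j ∈ Ico (0:ℝ) (2 * π)) →
    Module.finrank ℝ (Submodule.span ℝ
      (Set.range fun j : Fin n => (fun t => k (x j - t)))) = n

/-- The class `K̃^{G,φ}_{∞,β}`; `thetaR = true` encodes `Θ = ℝ` (Property B case),
`thetaR = false` encodes `Θ = ∅` (NCVD case). -/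
def KClass (G φ : ℝ → ℝ) (β : ℝ) (thetaR : Bool) : Set (ℝ → ℝ) :=
  {f | ∃ (a : ℝ) (u : ℝ → ℝ),
    (thetaR = false → a = 0) ∧
    (thetaR = true → (∫ t in (0:ℝ)..(2 * π), phiK β φ u t) = 0) ∧
    Function.Periodic u (2 * π) ∧ Measurable u ∧ (∀ x, |u x| ≤ 1) ∧
    f = fun x => a + conv G (phiK β φ u) x}

/-- Fourier cosine coefficient. -/
def fourierA (j : ℕ) (f : ℝ → ℝ) : ℝ :=
  (1 / π) * ∫ t in (0:ℝ)..(2 * π), f t * Real.cos (j * t)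

/-- Fourier sine coefficient. -/
def fourierB (j : ℕ) (f : ℝ → ℝ) : ℝ :=
  (1 / π) * ∫ t in (0:ℝ)..(2 * π), f t * Real.sin (j * t)

/-- The information `I_{2n−1}(f) = (a_0(f), a_1(f), b_1(f), …, a_{n−1}(f), b_{n−1}(f))`. -/
def Info (n : ℕ) (f : ℝ → ℝ) : Fin (2 * n - 1) → ℝ := fun i =>
  if i.val = 0 then fourierA 0 f
  else if i.val % 2 = 1 then fourierA ((i.val + 1) / 2) f
  else fourierB (i.val / 2) f

/-- Trigonometric polynomials of order `n−1`. -/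
def TrigPoly (n : ℕ) : Submodule ℝ (ℝ → ℝ) :=
  Submodule.span ℝ ((Set.range fun j : Fin n => (fun t : ℝ => Real.cos (j * t))) ∪
    (Set.range fun j : Fin n => (fun t : ℝ => Real.sin (j * t))))

/-- Kolmogorov `n`-width of `A` with respect to the norm functional `N`. -/
def kolWidth (n : ℕ) (A : Set (ℝ → ℝ)) (N : (ℝ → ℝ) → ℝ) : ℝ :=
  ⨅ X : {X : Submodule ℝ (ℝ → ℝ) // Module.finrank ℝ X = n},
    ⨆ f : A, ⨅ g : X.1, N ((f : ℝ → ℝ) - (g : ℝ → ℝ))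

/-- Linear `n`-width of `A` with respect to the norm functional `N`. -/
def linWidth (n : ℕ) (A : Set (ℝ → ℝ)) (N : (ℝ → ℝ) → ℝ) : ℝ :=
  ⨅ P : {P : (ℝ → ℝ) →ₗ[ℝ] (ℝ → ℝ) // Module.finrank ℝ (LinearMap.range P) ≤ n},
    ⨆ f : A, N ((f : ℝ → ℝ) - P.1 (f : ℝ → ℝ))

/-- Gel'fand `n`-width of `A` with respect to the norm functional `N`. -/
def gelWidth (n : ℕ) (A : Set (ℝ → ℝ)) (N : (ℝ → ℝ) → ℝ) : ℝ :=
  ⨅ X : {X : Submodule ℝ (ℝ → ℝ) // Module.finrank ℝ ((ℝ → ℝ) ⧸ X) = n},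
    ⨆ f : (A ∩ (X.1 : Set (ℝ → ℝ)) : Set (ℝ → ℝ)), N (f : ℝ → ℝ)

/-- Information `n`-width of `A` with respect to the norm functional `N`. -/
def infWidth (n : ℕ) (A : Set (ℝ → ℝ)) (N : (ℝ → ℝ) → ℝ) : ℝ :=
  ⨅ l : Fin n → ((ℝ → ℝ) →ₗ[ℝ] ℝ), ⨅ m : (Fin n → ℝ) → (ℝ → ℝ),
    ⨆ f : A, N ((f : ℝ → ℝ) - m (fun i => l i (f : ℝ → ℝ)))

/-- All eight widths `d_{2n}, λ_{2n}, d^{2n}, i_{2n}, d_{2n−1}, λ_{2n−1}, d^{2n−1}, i_{2n−1}`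
of `A` equal `v`. -/
def allWidthsEq (A : Set (ℝ → ℝ)) (n : ℕ) (N : (ℝ → ℝ) → ℝ) (v : ℝ) : Prop :=
  kolWidth (2 * n) A N = v ∧ linWidth (2 * n) A N = v ∧
  gelWidth (2 * n) A N = v ∧ infWidth (2 * n) A N = v ∧
  kolWidth (2 * n - 1) A N = v ∧ linWidth (2 * n - 1) A N = v ∧
  gelWidth (2 * n - 1) A N = v ∧ infWidth (2 * n - 1) A N = v

/-- The mean-zero periodic integral `G̃(x) = ∫_0^x (G(y) − a_0) dy`. -/
def Gtilde (G : ℝ → ℝ) : ℝ → ℝ :=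
  fun x => ∫ y in (0:ℝ)..x, (G y - (1 / (2 * π)) * ∫ z in (0:ℝ)..(2 * π), G z)

/-- `F` is a `2π`-periodic integral of `f`. -/
def IsPeriodicIntegral (F f : ℝ → ℝ) : Prop :=
  Function.Periodic F (2 * π) ∧ ∀ x, HasDerivAt F (f x) x

/-- Nonincreasing rearrangement `r(f, t)` of `|f|` on `[0, 2π]`. -/
def rearr (f : ℝ → ℝ) (t : ℝ) : ℝ :=
  sInf {lam : ℝ | 0 ≤ lam ∧
    (volume {x ∈ Icc (0:ℝ) (2 * π) | lam < |f x|}).toReal ≤ t}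

/-- `ψ` is a `2l`-regular function. -/
def RegularPeriodic (ψ : ℝ → ℝ) (l : ℝ) : Prop :=
  Continuous ψ ∧ Function.Periodic ψ (2 * l) ∧
  ∃ a c, a < c ∧ c < a + 2 * l ∧
    ((∀ x, ψ x ≤ ψ a) ∨ (∀ x, ψ a ≤ ψ x)) ∧
    (StrictMonoOn ψ (Ioo a c) ∨ StrictAntiOn ψ (Ioo a c)) ∧
    (StrictMonoOn ψ (Ioo c (a + 2 * l)) ∨ StrictAntiOn ψ (Ioo c (a + 2 * l)))

/-- `f` possesses the μ-property with respect to `ψ`: for every shift `α` and every interval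
of monotonicity of `ψ`, the difference `ψ(t) − f(t+α)` does not change sign or changes sign
exactly once, from `−` to `+` if `ψ` increases and from `+` to `−` if `ψ` decreases. -/
def MuProperty (f ψ : ℝ → ℝ) : Prop :=
  ∀ α p q : ℝ, p < q →
    (StrictMonoOn ψ (Icc p q) →
      ∀ t₁ ∈ Icc p q, ∀ t₂ ∈ Icc p q, t₁ < t₂ →
        0 < ψ t₁ - f (t₁ + α) → ¬ (ψ t₂ - f (t₂ + α) < 0)) ∧
    (StrictAntiOn ψ (Icc p q) →
      ∀ t₁ ∈ Icc p q, ∀ t₂ ∈ Icc p q, t₁ < t₂ →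
        ψ t₁ - f (t₁ + α) < 0 → ¬ (0 < ψ t₂ - f (t₂ + α)))

/-- The step function `h_ξ` associated to knots `ξ = (ξ_1, …, ξ_{2m})`,
equal to `(−1)^j` on `[ξ_{j−1}, ξ_j)` and extended `2π`-periodically. -/
def hxi (ξ : List ℝ) : ℝ → ℝ := fun x =>
  (-1 : ℝ) ^ ((ξ.countP fun z => decide (z ≤ x - 2 * π * ⌊x / (2 * π)⌋)) + 1)

/-- `Λ̄_{2n}`: knot vectors `0 ≤ ξ_1 < ⋯ < ξ_{2m} < 2π` with `m ≤ n`. -/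
def LambdaBar (n : ℕ) : Set (List ℝ) :=
  {ξ | ∃ m : ℕ, 0 < m ∧ m ≤ n ∧ ξ.length = 2 * m ∧ ξ.Chain' (· < ·) ∧
    ∀ x ∈ ξ, x ∈ Ico (0:ℝ) (2 * π)}

/-- `Λ̄_{2n}^{φ,Θ}`: when `Θ = ℝ` (`thetaR = true`) the orthogonality
`∫_0^{2π} φ((K_β∗h_ξ)(t)) dt = 0` is imposed. -/
def LambdaBarPhi (n : ℕ) (β : ℝ) (φ : ℝ → ℝ) (thetaR : Bool) : Set (List ℝ) :=
  {ξ ∈ LambdaBar n |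
    thetaR = true → (∫ t in (0:ℝ)..(2 * π), phiK β φ (hxi ξ) t) = 0}

/-- The class of perfect splines `K̃^G_β(Λ̄_{2n}^{φ,Θ})`. -/
def SplineClass (G φ : ℝ → ℝ) (β : ℝ) (n : ℕ) (thetaR : Bool) : Set (ℝ → ℝ) :=
  {f | ∃ (a : ℝ) (ξ : List ℝ), (thetaR = false → a = 0) ∧
    ξ ∈ LambdaBarPhi n β φ thetaR ∧
    f = fun x => a + conv G (phiK β φ (hxi ξ)) x}

/-- The Bernoulli-type kernel `D_r(t) = 2 ∑_{k≥1} cos(kt − πr/2)/k^r`. -/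
def Dker (r : ℕ) : ℝ → ℝ :=
  fun t => 2 * ∑' k : ℕ, Real.cos (((k : ℝ) + 1) * t - π * r / 2) / ((k : ℝ) + 1) ^ r

/-- `φ_0(z) = tan(πz/4)`. -/
def phi0 : ℝ → ℝ := fun z => Real.tan (π * z / 4)

/-- `φ_1(z) = z`. -/
def phi1 : ℝ → ℝ := fun z => z

end

/-! `h_n` is `2π`-periodic and `π/n`-antiperiodic. Convolution with a `2π`-periodic kernel
preserves both properties, and so does `u ↦ φ(K_β ∗ u)` since `φ` is odd; hence `Φ` is
`π/n`-antiperiodic, and continuous as the convolution of a continuous kernel with an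
integrable function. Then `|Φ|` is `π/n`-periodic and attains `‖Φ‖_∞` at some
`y ∈ [0, π/n)`, and `Φ(y + jπ/n) = (-1)^j Φ(y)` for `j = 0, …, 2n − 1`. -/

section Convolution

variable {k u : ℝ → ℝ}

lemma conv_periodic (hk : Function.Periodic k (2 * π)) (u : ℝ → ℝ) :
    Function.Periodic (conv k u) (2 * π) := fun x => by
  have hk' : ∀ y, k (y + 2 * π) = k y := hk
  simp only [conv, add_sub_right_comm, hk']

lemma conv_antiperiodic (hk : Function.Periodic k (2 * π)) (hu : Function.Periodic u (2 * π))
    {c : ℝ} (hua : Function.Antiperiodic u c) : Function.Antiperiodic (conv k u) c := fun x => by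
  have hper : Function.Periodic (fun s => k (x - s) * u s) (2 * π) := (hk.const_sub x).mul hu
  have hshift : ∫ t in (0:ℝ)..(2 * π), k (x + c - t) * u t
      = -∫ s in (-c)..(-c + 2 * π), k (x - s) * u s := by
    have := intervalIntegral.integral_comp_add_right (fun t => k (x + c - t) * u t) c
      (a := -c) (b := -c + 2 * π)
    have hua' : ∀ s, u (s + c) = -u s := hua
    rw [neg_add_cancel, neg_add_cancel_comm] at this
    simp only [add_sub_add_right_eq_sub, hua', mul_neg, intervalIntegral.integral_neg] at this
    exact this.symm
  simp only [conv, hshift, hper.intervalIntegral_add_eq (-c) 0, zero_add, mul_neg]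

lemma continuous_conv (hk : Continuous k) (hkp : Function.Periodic k (2 * π))
    (hu : IntervalIntegrable u volume 0 (2 * π)) : Continuous (conv k u) := by
  obtain ⟨M, hM⟩ := (Metric.isBounded_iff_subset_closedBall 0).1
    (hkp.isBounded_of_continuous (by positivity) hk)
  refine continuous_const.mul (intervalIntegral.continuous_of_dominated_interval
    (bound := fun t => M * ‖u t‖) (fun x => ?_) (fun x => ?_) (hu.norm.const_mul M) ?_)
  · exact ((hk.comp (continuous_const.sub continuous_id)).aestronglyMeasurable).mul
      hu.def'.aestronglyMeasurable
  · refine Filter.Eventually.of_forall fun t _ => ?_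
    rw [norm_mul]
    gcongr
    simpa using hM (mem_range_self (x - t))
  · exact Filter.Eventually.of_forall fun t _ =>
      (hk.comp (continuous_id.sub continuous_const)).mul continuous_const

end Convolution

lemma inv_cosh_le_two_mul_exp_neg_abs (y : ℝ) : (cosh y)⁻¹ ≤ 2 * exp (-|y|) := by
  have hcosh : exp |y| / 2 ≤ cosh y := by
    rw [← cosh_abs, cosh_eq]
    linarith [exp_pos (-|y|)]
  rw [exp_neg, ← div_eq_mul_inv, le_div_iff₀ (exp_pos _), inv_mul_le_iff₀ (cosh_pos y)]
  linarith

lemma Kker_periodic (β : ℝ) : Function.Periodic (Kker β) (2 * π) := fun z => by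
  simp only [Kker, mul_add]
  congr 3 with k
  rw [show ((k : ℝ) + 1) * (2 * π) = ((k + 1 : ℕ) : ℤ) * (2 * π) by push_cast; ring,
    cos_add_int_mul_two_pi]

lemma continuous_Kker {β : ℝ} (hβ : β ≠ 0) : Continuous (Kker β) := by
  have hq : exp (-|β|) < 1 := exp_lt_one_iff.2 (neg_neg_of_pos (abs_pos.2 hβ))
  refine continuous_const.add (continuous_const.mul (continuous_tsum
    (u := fun k : ℕ => 2 * exp (-|β|) ^ (k + 1)) (fun k => by fun_prop) ?_ fun k z => ?_))
  · simp only [pow_succ, ← mul_assoc]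
    exact ((summable_geometric_of_lt_one (exp_nonneg _) hq).mul_left 2).mul_right _
  · calc ‖cos (((k : ℝ) + 1) * z) / cosh (((k : ℝ) + 1) * β)‖
        ≤ (cosh (((k : ℝ) + 1) * β))⁻¹ := by
          rw [norm_div, Real.norm_eq_abs, Real.norm_of_nonneg (cosh_pos _).le, div_eq_mul_inv]
          exact mul_le_of_le_one_left (inv_nonneg.2 (cosh_pos _).le) (abs_cos_le_one _)
      _ ≤ 2 * exp (-|((k : ℝ) + 1) * β|) := inv_cosh_le_two_mul_exp_neg_abs _
      _ = 2 * exp (-|β|) ^ (k + 1) := by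
          rw [← exp_nat_mul, abs_mul, abs_of_pos (by positivity : (0:ℝ) < k + 1)]
          push_cast
          ring_nf

lemma measurable_hstep (n : ℕ) : Measurable (hstep n) :=
  measurable_from_top.comp ((by fun_prop : Measurable fun x : ℝ => x * n / π).floor.add_const 1)

lemma abs_hstep (n : ℕ) (x : ℝ) : |hstep n x| = 1 :=
  abs_neg_one_zpow _

lemma intervalIntegrable_hstep (n : ℕ) (a b : ℝ) : IntervalIntegrable (hstep n) volume a b :=
  (intervalIntegrable_const (c := (1 : ℝ))).mono_fun (measurable_hstep n).aestronglyMeasurable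
    (Filter.Eventually.of_forall fun x => by simp [abs_hstep])

lemma hstep_periodic (n : ℕ) : Function.Periodic (hstep n) (2 * π) := fun x => by
  have h : (x + 2 * π) * n / π = x * n / π + ((2 * n : ℤ) : ℝ) := by
    push_cast; field_simp
  simp only [hstep, h, Int.floor_add_intCast, add_right_comm _ (2 * (n : ℤ)),
    zpow_add₀ (by norm_num : (-1:ℝ) ≠ 0) _ (2 * (n : ℤ)), zpow_mul]
  norm_num

lemma hstep_antiperiodic {n : ℕ} (hn : n ≠ 0) : Function.Antiperiodic (hstep n) (π / n) := by
  intro x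
  have h : (x + π / n) * n / π = x * n / π + ((1 : ℤ) : ℝ) := by
    push_cast; field_simp
  simp only [hstep, h, Int.floor_add_intCast, add_right_comm _ (1 : ℤ),
    zpow_add₀ (by norm_num : (-1:ℝ) ≠ 0) _ 1, zpow_one, mul_neg_one]

section PhiK

variable {β c : ℝ} {φ u : ℝ → ℝ}

lemma phiK_periodic (hu : Function.Periodic u (2 * π)) :
    Function.Periodic (phiK β φ u) (2 * π) := by
  unfold phiK
  split_ifs
  · exact hu
  · exact (conv_periodic (Kker_periodic β) u).comp φ

lemma phiK_antiperiodic (hφ : ∀ x, φ (-x) = -φ x) (hu : Function.Periodic u (2 * π))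
    (hua : Function.Antiperiodic u c) : Function.Antiperiodic (phiK β φ u) c := by
  unfold phiK
  split_ifs
  · exact hua
  · exact fun x => by simp only [conv_antiperiodic (Kker_periodic β) hu hua x, hφ]

lemma intervalIntegrable_phiK (hφ : Continuous φ) (hu : IntervalIntegrable u volume 0 (2 * π)) :
    IntervalIntegrable (phiK β φ u) volume 0 (2 * π) := by
  unfold phiK
  split_ifs with hβ
  · exact hu
  · exact Continuous.intervalIntegrable
      (hφ.comp (continuous_conv (continuous_Kker hβ) (Kker_periodic β) hu)) _ _

end PhiK

section Equioscillation

variable {f : ℝ → ℝ} {c : ℝ}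

lemma exists_abs_eq_supNorm (hf : Continuous f) {p : ℝ} (hp : Function.Periodic f p)
    (hp0 : p ≠ 0) : ∃ x, |f x| = supNorm f := by
  obtain ⟨a, ha⟩ :=
    ((hp.comp abs).compact_of_continuous hp0 hf.abs).exists_isGreatest (range_nonempty _)
  obtain ⟨x, rfl⟩ := ha.1
  exact ⟨x, ha.csSup_eq.symm⟩

lemma Function.Antiperiodic.exists_mem_Ico₀_abs_eq_supNorm (ha : Function.Antiperiodic f c)
    (hf : Continuous f) (hc : 0 < c) : ∃ y ∈ Ico 0 c, |f y| = supNorm f := by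
  have habs : Function.Periodic (fun x => |f x|) c := fun x => by
    simp only [ha x, abs_neg]
  obtain ⟨x, hx⟩ := exists_abs_eq_supNorm hf ha.periodic_two_mul (by positivity)
  obtain ⟨y, hy, hxy⟩ := habs.exists_mem_Ico₀ hc x
  exact ⟨y, hy, hxy ▸ hx⟩

lemma Function.Antiperiodic.exists_equioscillation (ha : Function.Antiperiodic f c)
    (hf : Continuous f) (hc : 0 < c) (m : ℕ) :
    ∃ ε : ℝ, (ε = 1 ∨ ε = -1) ∧
      ∃ t : Fin m → ℝ, StrictMono t ∧ (∀ j, t j ∈ Ico 0 (m * c)) ∧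
        ∀ j : Fin m, f (t j) = ε * (-1) ^ ((j : ℕ) + 1) * supNorm f := by
  obtain ⟨y, ⟨hy0, hyc⟩, hy⟩ := ha.exists_mem_Ico₀_abs_eq_supNorm hf hc
  obtain ⟨ε, hε, hfy⟩ : ∃ ε : ℝ, (ε = 1 ∨ ε = -1) ∧ f y = -ε * supNorm f := by
    rcases (abs_eq (hy ▸ abs_nonneg _)).1 hy with h | h
    · exact ⟨-1, .inr rfl, by rw [h]; ring⟩
    · exact ⟨1, .inl rfl, by rw [h]; ring⟩
  refine ⟨ε, hε, fun j => y + (j : ℕ) * c, fun i j hij => ?_, fun j => ⟨?_, ?_⟩,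
    fun j => ?_⟩
  · have hij' : ((i : ℕ) : ℝ) < (j : ℕ) := Nat.cast_lt.2 hij
    dsimp only
    gcongr
  · positivity
  · have hj : ((j : ℕ) : ℝ) + 1 ≤ m := by exact_mod_cast j.isLt
    nlinarith
  · have hshift : f (y + (j : ℕ) * c) = (-1) ^ (j : ℕ) * f y := by
      simpa only [nsmul_eq_mul, zsmul_eq_mul, Int.cast_pow, Int.cast_neg, Int.cast_one] using
        ha.add_nsmul_eq (x := y) (j : ℕ)
    dsimp only
    rw [hshift, hfy]
    ring

end Equioscillation

theorem standard_function_oscillation_general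
    (β : ℝ) (G : ℝ → ℝ) (hGc : Continuous G)
    (hGp : Function.Periodic G (2 * π)) (φ : ℝ → ℝ) (hφ : IsAdmissiblePhi φ)
    (n : ℕ) (hn : 0 < n) :
    Continuous (stdPhi G φ β n) ∧
    (∀ x : ℝ, stdPhi G φ β n (x + π / n) = -stdPhi G φ β n x) ∧
    ∃ ε : ℝ, (ε = 1 ∨ ε = -1) ∧
      ∃ t : Fin (2 * n) → ℝ, StrictMono t ∧ (∀ j, t j ∈ Ico (0:ℝ) (2 * π)) ∧
        ∀ j : Fin (2 * n),
          stdPhi G φ β n (t j) =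
            ε * (-1) ^ ((j : ℕ) + 1) * supNorm (stdPhi G φ β n) := by
  have hcont : Continuous (stdPhi G φ β n) :=
    continuous_conv hGc hGp
      (intervalIntegrable_phiK hφ.differentiable.continuous (intervalIntegrable_hstep n 0 _))
  have hanti : Function.Antiperiodic (stdPhi G φ β n) (π / n) :=
    conv_antiperiodic hGp (phiK_periodic (hstep_periodic n))
      (phiK_antiperiodic hφ.odd (hstep_periodic n) (hstep_antiperiodic hn.ne'))
  refine ⟨hcont, hanti, ?_⟩
  have hperiod : ((2 * n : ℕ) : ℝ) * (π / n) = 2 * π := by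
    push_cast
    field_simp
  simpa only [hperiod] using hanti.exists_equioscillation hcont (by positivity) (2 * n)

/-- **Antiperiodicity and equioscillation of the standard function**:
`Φ_{n,β}^{G,φ}` is continuous, `π/n`-antiperiodic, and attains the values
`ε(−1)^j‖Φ‖_∞` at at least `2n` points of a period. -/
theorem standard_function_oscillation
    (β : ℝ) (hβ : 0 ≤ β) (G : ℝ → ℝ) (hGc : Continuous G)
    (hGp : Function.Periodic G (2 * π)) (φ : ℝ → ℝ) (hφ : IsAdmissiblePhi φ)
    (n : ℕ) (hn : 0 < n) :
    Continuous (stdPhi G φ β n) ∧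
    (∀ x : ℝ, stdPhi G φ β n (x + π / n) = -stdPhi G φ β n x) ∧
    ∃ ε : ℝ, (ε = 1 ∨ ε = -1) ∧
      ∃ t : Fin (2 * n) → ℝ, StrictMono t ∧ (∀ j, t j ∈ Ico (0:ℝ) (2 * π)) ∧
        ∀ j : Fin (2 * n),
          stdPhi G φ β n (t j) =
            ε * (-1) ^ ((j : ℕ) + 1) * supNorm (stdPhi G φ β n) :=
  standard_function_oscillation_general β G hGc hGp φ hφ n hn
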